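/- arXiv:2501.06612 — 2 statements merged into one kernel-verified Lean document; each statement's English description precedes it below -/
import Mathlib

section
/- Let X̂, Y be real random variables with all joint moments finite, and suppose E[Q(X̂)(Y−Z)] = (1/2)·E[Q'(X̂)] for all polynomials Q, where X̂ is centered Gaussian with variance σ² > 0 and Z lies in the closed span of {1, X̂} in L². Then for the Hermite polynomials Q_k = H_k^{σ²}, E[Q_k(X̂)·Y] = 0 for every k ≥ 2. -/
open MeasureTheory ProbabilityTheory Polynomial Real

lemma pdf_hasDerivAt (v : NNReal) (hv : (v:ℝ) ≠ 0) (x : ℝ) :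
    HasDerivAt (gaussianPDFReal 0 v) (-x / v * gaussianPDFReal 0 v x) x := by
  have h0 : HasDerivAt (fun y : ℝ => -(y - 0) ^ 2 / (2 * (v:ℝ))) (-x / v) x := by
    have h1 : HasDerivAt (fun y : ℝ => (y - 0) ^ 2) (↑2 * (x - 0) ^ 1 * 1) x :=
      ((hasDerivAt_id x).sub_const 0).pow 2
    have h2 := h1.neg.div_const (2 * (v:ℝ))
    refine h2.congr_deriv ?_
    field_simp
    ring
  have h3 := (h0.exp).const_mul (√(2 * π * (v:ℝ)))⁻¹
  rw [gaussianPDFReal_def]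
  refine h3.congr_deriv ?_
  ring

lemma integral_gaussianReal_eq' (v : NNReal) (hv : v ≠ 0) (g : ℝ → ℝ) :
    ∫ x, g x ∂(gaussianReal 0 v) = ∫ x, g x * gaussianPDFReal 0 v x := by
  rw [gaussianReal_of_var_ne_zero 0 hv]
  have h : (gaussianPDF 0 v) = fun x => ((gaussianPDFReal 0 v x).toNNReal : ENNReal) := by
    funext x; simp [gaussianPDF, ENNReal.ofReal]
  rw [h, integral_withDensity_eq_integral_smul
    ((measurable_gaussianPDFReal 0 v).real_toNNReal)]
  congr 1
  funext x
  simp [NNReal.smul_def, Real.coe_toNNReal _ (gaussianPDFReal_nonneg 0 v x), mul_comm]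

lemma integrable_poly_pdf (v : NNReal) (hv : v ≠ 0) (q : Polynomial ℝ)
    (hq : Integrable (fun x => q.eval x) (gaussianReal 0 v)) :
    Integrable (fun x => q.eval x * gaussianPDFReal 0 v x) := by
  rw [gaussianReal_of_var_ne_zero 0 hv] at hq
  rw [integrable_withDensity_iff (measurable_gaussianPDF 0 v)
    (ae_of_all _ fun x => ENNReal.ofReal_lt_top)] at hq
  refine hq.congr (ae_of_all _ fun x => ?_)
  simp [gaussianPDF, ENNReal.toReal_ofReal (gaussianPDFReal_nonneg 0 v x)]

lemma stein_poly (v : NNReal) (hv : v ≠ 0) (q : Polynomial ℝ)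
    (hI : ∀ p : Polynomial ℝ, Integrable (fun x => p.eval x) (gaussianReal 0 v)) :
    ∫ x, x * q.eval x ∂(gaussianReal 0 v)
      = v * ∫ x, (derivative q).eval x ∂(gaussianReal 0 v) := by
  have hvr : (v:ℝ) ≠ 0 := by exact_mod_cast hv
  set pdf := gaussianPDFReal 0 v with hpdf
  have i1 : Integrable (fun x => x * q.eval x * pdf x) := by
    have h := integrable_poly_pdf v hv (X * q) (hI _)
    refine h.congr (ae_of_all _ fun x => by simp [hpdf])
  have i2 : Integrable (fun x => (derivative q).eval x * pdf x) :=
    integrable_poly_pdf v hv _ (hI _)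
  have iq : Integrable (fun x => q.eval x * pdf x) := integrable_poly_pdf v hv _ (hI _)
  have key : ∫ x, ((v:ℝ) * (derivative q).eval x - x * q.eval x) * pdf x = 0 := by
    apply integral_eq_zero_of_hasDerivAt_of_integrable
      (f := fun x => (v:ℝ) * (q.eval x * pdf x))
    · intro x
      have hq' : HasDerivAt (fun y => q.eval y) ((derivative q).eval x) x :=
        q.hasDerivAt x
      have hp := pdf_hasDerivAt v hvr x
      have h := (hq'.mul hp).const_mul (v:ℝ)
      refine h.congr_deriv ?_
      field_simp
      ring
    · have h := integrable_poly_pdf v hv (C (v:ℝ) * derivative q - X * q) (hI _)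
      refine h.congr (ae_of_all _ fun x => by simp [hpdf])
    · exact iq.const_mul _
  have split : ((v:ℝ) * ∫ x, (derivative q).eval x * pdf x) - ∫ x, x * q.eval x * pdf x
      = ∫ x, ((v:ℝ) * (derivative q).eval x - x * q.eval x) * pdf x := by
    rw [← integral_const_mul, ← integral_sub (i2.const_mul (v:ℝ)) i1]
    congr 1
    funext x
    ring
  rw [← split] at key
  rw [integral_gaussianReal_eq' v hv, integral_gaussianReal_eq' v hv, ← hpdf]
  linear_combination -key

/-- If `X̂` is centered Gaussian with variance `σ² > 0`, `Z = a + b·X̂` lies in the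
closed span of `{1, X̂}`, all joint moments are finite, and
`E[Q(X̂)(Y-Z)] = (1/2) E[Q'(X̂)]` for all polynomials `Q`, then for the Hermite
polynomials `Q_k = H_k^{σ²}` one has `E[Q_k(X̂) Y] = 0` for every `k ≥ 2`. -/
theorem hermite_orthogonal_to_Y
    {Ω : Type*} [MeasurableSpace Ω] (P : Measure Ω) [IsProbabilityMeasure P]
    (Xhat Y Z : Ω → ℝ)
    (hX : Measurable Xhat) (hY : Measurable Y) (hZmeas : Measurable Z)
    (v : NNReal) (hv : 0 < v)
    (hlaw : Measure.map Xhat P = gaussianReal 0 v)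
    (a b : ℝ) (hZ : ∀ ω, Z ω = a + b * Xhat ω)
    (hint : ∀ Q : Polynomial ℝ,
      Integrable (fun ω => Q.eval (Xhat ω) * Y ω) P ∧
      Integrable (fun ω => Q.eval (Xhat ω) * Z ω) P ∧
      Integrable (fun ω => Q.eval (Xhat ω)) P)
    (hgen : ∀ Q : Polynomial ℝ,
      ∫ ω, Q.eval (Xhat ω) * (Y ω - Z ω) ∂P
        = (1 / 2) * ∫ ω, (Polynomial.derivative Q).eval (Xhat ω) ∂P)
    (H : ℕ → Polynomial ℝ)
    (hH0 : H 0 = 1)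
    (hHrec : ∀ n : ℕ, H (n + 1) =
      Polynomial.X * H n - Polynomial.C (v : ℝ) * Polynomial.derivative (H n)) :
    ∀ k : ℕ, 2 ≤ k → ∫ ω, (H k).eval (Xhat ω) * Y ω ∂P = 0 := by
  have hvne : v ≠ 0 := hv.ne'
  -- integrability of polynomials under the Gaussian law
  have hIγ : ∀ q : Polynomial ℝ, Integrable (fun x => q.eval x) (gaussianReal 0 v) := by
    intro q
    rw [← hlaw, integrable_map_measure ((q.continuous).aestronglyMeasurable)
      hX.aemeasurable]
    exact (hint q).2.2
  -- transfer of integrals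
  have hmap : ∀ q : Polynomial ℝ, ∫ ω, q.eval (Xhat ω) ∂P = ∫ x, q.eval x ∂(gaussianReal 0 v) := by
    intro q
    rw [← hlaw, integral_map hX.aemeasurable ((q.continuous).aestronglyMeasurable)]
  -- derivative of Hermite polynomials
  have hd : ∀ n : ℕ, derivative (H (n + 1)) = C ((n : ℝ) + 1) * H n := by
    intro n
    induction n with
    | zero => rw [hHrec 0, hH0]; simp
    | succ n ih =>
      have e1 : derivative (derivative (H (n + 1))) = C ((n : ℝ) + 1) * derivative (H n) := by
        rw [ih, derivative_C_mul]
      rw [hHrec (n + 1), derivative_sub, derivative_mul, derivative_X, derivative_C_mul, e1, ih, hHrec n]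
      simp only [Nat.cast_add, Nat.cast_one, map_add, map_one]
      ring
  have hstein : ∀ q : Polynomial ℝ, ∫ x, x * q.eval x ∂(gaussianReal 0 v)
      = v * ∫ x, (derivative q).eval x ∂(gaussianReal 0 v) :=
    fun q => stein_poly v hvne q hIγ
  -- Hermite polynomials have mean zero for n ≥ 1
  have hmean : ∀ n : ℕ, ∫ x, (H (n + 1)).eval x ∂(gaussianReal 0 v) = 0 := by
    intro n
    have h1 : (fun x => (H (n + 1)).eval x)
        = fun x => x * (H n).eval x - (v : ℝ) * (derivative (H n)).eval x := by
      funext x; rw [hHrec n]; simp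
    have i1 : Integrable (fun x => x * (H n).eval x) (gaussianReal 0 v) := by
      have h := hIγ (X * H n)
      refine h.congr (ae_of_all _ fun x => by simp)
    have i2 : Integrable (fun x => (v : ℝ) * (derivative (H n)).eval x) (gaussianReal 0 v) :=
      (hIγ (derivative (H n))).const_mul _
    rw [h1, integral_sub i1 i2, hstein (H n), integral_const_mul, sub_self]
  intro k hk
  obtain ⟨m, rfl⟩ : ∃ m, k = m + 2 := ⟨k - 2, by omega⟩
  set q : Polynomial ℝ := H (m + 2) with hq
  have hDγ : ∫ x, (derivative q).eval x ∂(gaussianReal 0 v) = 0 := by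
    rw [hq, hd (m + 1)]
    simp only [eval_mul, eval_C]
    rw [integral_const_mul, hmean m, mul_zero]
  have hBγ : ∫ x, q.eval x ∂(gaussianReal 0 v) = 0 := hmean (m + 1)
  have hCγ : ∫ x, x * q.eval x ∂(gaussianReal 0 v) = 0 := by
    rw [hstein q, hDγ, mul_zero]
  have hD : ∫ ω, (derivative q).eval (Xhat ω) ∂P = 0 := by rw [hmap]; exact hDγ
  have hB : ∫ ω, q.eval (Xhat ω) ∂P = 0 := by rw [hmap]; exact hBγ
  have hC : ∫ ω, Xhat ω * q.eval (Xhat ω) ∂P = 0 := by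
    have h := hmap (X * q)
    simp only [eval_mul, eval_X] at h
    rw [h]
    exact hCγ
  have hZint : ∫ ω, q.eval (Xhat ω) * Z ω ∂P = 0 := by
    have heq : (fun ω => q.eval (Xhat ω) * Z ω)
        = fun ω => a * q.eval (Xhat ω) + b * (Xhat ω * q.eval (Xhat ω)) := by
      funext ω; rw [hZ ω]; ring
    have iA : Integrable (fun ω => a * q.eval (Xhat ω)) P := ((hint q).2.2).const_mul a
    have iB : Integrable (fun ω => b * (Xhat ω * q.eval (Xhat ω))) P := by
      have h := (hint (X * q)).2.2
      have h' : Integrable (fun ω => Xhat ω * q.eval (Xhat ω)) P :=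
        h.congr (ae_of_all _ fun ω => by simp)
      exact h'.const_mul b
    rw [heq, integral_add iA iB, integral_const_mul, integral_const_mul, hB, hC]
    ring
  have hgenq := hgen q
  have hsub : ∫ ω, q.eval (Xhat ω) * (Y ω - Z ω) ∂P
      = ∫ ω, q.eval (Xhat ω) * Y ω ∂P - ∫ ω, q.eval (Xhat ω) * Z ω ∂P := by
    rw [← integral_sub (hint q).1 (hint q).2.1]
    congr 1; funext ω; ring
  rw [hsub, hZint, sub_zero, hD, mul_zero] at hgenq
  exact hgenq
end

section
/- Let ρ ∈ (−d, 0] and k ≥ 1 an integer with ρ·k > −d. Suppose G : 𝕋^d → ℝ is measurable with |G(z)| ≤ |z|^ρ (torus distance). Then for every λ ∈ (0,1], every x ∈ 𝕋^d, and every smooth φ supported in the ball of radius 1/4 with ‖φ‖_∞ ≤ 1, one has ∫∫ φ_x^λ(y)·φ_x^λ(z)·|G(y−z)|^k dy dz ≲ λ^{ρk}, where φ_x^λ(z) = λ^{−d}φ((z−x)/λ), with implied constant depending only on d, ρ, k. -/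
open MeasureTheory Set

section AuxWick

/-- Integrability of `‖w‖ ^ s` near the origin when `s ∈ (-d, 0]`. -/
private lemma aux_integrableOn_rpow (d : ℕ) (hd : 1 ≤ d) (s : ℝ)
    (hs1 : -(d : ℝ) < s) (hs2 : s ≤ 0) :
    IntegrableOn (fun w : EuclideanSpace ℝ (Fin d) => ‖w‖ ^ s)
      (Metric.ball 0 1) volume := by
  haveI : NeZero d := ⟨by omega⟩
  have hmeas : Measurable fun w : EuclideanSpace ℝ (Fin d) => ‖w‖ ^ s := by fun_prop
  refine ⟨hmeas.aestronglyMeasurable, ?_⟩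
  rw [hasFiniteIntegral_iff_ofReal
    (Filter.Eventually.of_forall fun w => Real.rpow_nonneg (norm_nonneg _) _)]
  -- dyadic annuli
  set A : ℕ → Set (EuclideanSpace ℝ (Fin d)) := fun n =>
    Metric.ball 0 ((1/2 : ℝ) ^ n) \ Metric.ball 0 ((1/2 : ℝ) ^ (n + 1)) with hA
  have hsub : Metric.ball (0 : EuclideanSpace ℝ (Fin d)) 1 ⊆ {0} ∪ ⋃ n, A n := by
    intro w hw
    rcases eq_or_ne w 0 with rfl | hw0
    · exact Or.inl rfl
    · right
      have hwpos : 0 < ‖w‖ := norm_pos_iff.2 hw0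
      have hw1 : ‖w‖ < 1 := by simpa [mem_ball_zero_iff] using hw
      have hex : ∃ n : ℕ, (1/2 : ℝ) ^ (n + 1) ≤ ‖w‖ := by
        obtain ⟨n, hn⟩ := exists_pow_lt_of_lt_one hwpos (by norm_num : (1/2 : ℝ) < 1)
        exact ⟨n, by
          have : (1/2 : ℝ) ^ (n + 1) ≤ (1/2 : ℝ) ^ n :=
            pow_le_pow_of_le_one (by norm_num) (by norm_num) (Nat.le_succ n)
          linarith⟩
      classical
      have h1 : (1/2 : ℝ) ^ (Nat.find hex + 1) ≤ ‖w‖ := Nat.find_spec hex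
      have h2 : ‖w‖ < (1/2 : ℝ) ^ (Nat.find hex) := by
        rcases Nat.eq_zero_or_pos (Nat.find hex) with h | h
        · rw [h]; simpa using hw1
        · have hm := Nat.find_min hex (Nat.sub_lt h Nat.one_pos)
          push_neg at hm
          have heq : Nat.find hex - 1 + 1 = Nat.find hex := Nat.succ_pred_eq_of_pos h
          rwa [heq] at hm
      exact mem_iUnion.2 ⟨Nat.find hex, by
        simp only [hA, mem_diff, mem_ball_zero_iff]
        exact ⟨h2, by simpa using not_lt.2 h1⟩⟩
  calc ∫⁻ w in Metric.ball (0 : EuclideanSpace ℝ (Fin d)) 1, ENNReal.ofReal (‖w‖ ^ s)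
      ≤ ∫⁻ w in ({0} ∪ ⋃ n, A n : Set (EuclideanSpace ℝ (Fin d))),
          ENNReal.ofReal (‖w‖ ^ s) := lintegral_mono_set hsub
    _ ≤ (∫⁻ w in ({0} : Set (EuclideanSpace ℝ (Fin d))), ENNReal.ofReal (‖w‖ ^ s))
          + ∫⁻ w in (⋃ n, A n), ENNReal.ofReal (‖w‖ ^ s) := lintegral_union_le _ _ _
    _ ≤ 0 + ∑' n : ℕ, ∫⁻ w in A n, ENNReal.ofReal (‖w‖ ^ s) := by
        gcongr
        · have : volume ({0} : Set (EuclideanSpace ℝ (Fin d))) = 0 := measure_singleton 0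
          simp [Measure.restrict_eq_zero.2 this]
        · exact lintegral_iUnion_le _ _
    _ = ∑' n : ℕ, ∫⁻ w in A n, ENNReal.ofReal (‖w‖ ^ s) := by rw [zero_add]
    _ ≤ ∑' n : ℕ, (ENNReal.ofReal ((1/2 : ℝ) ^ s) * volume (Metric.ball (0 : EuclideanSpace ℝ (Fin d)) 1))
          * ENNReal.ofReal ((1/2 : ℝ) ^ ((d : ℝ) + s)) ^ n := by
        apply ENNReal.tsum_le_tsum
        intro n
        have hAmeas : MeasurableSet (A n) :=
          Metric.isOpen_ball.measurableSet.diff Metric.isOpen_ball.measurableSet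
        have hstep : ∀ w ∈ A n, ENNReal.ofReal (‖w‖ ^ s)
            ≤ ENNReal.ofReal (((1/2 : ℝ) ^ (n + 1)) ^ s) := by
          intro w hw
          apply ENNReal.ofReal_le_ofReal
          exact Real.rpow_le_rpow_of_nonpos (by positivity)
            (by simpa [hA, mem_diff, mem_ball_zero_iff, not_lt] using hw.2) hs2
        calc ∫⁻ w in A n, ENNReal.ofReal (‖w‖ ^ s)
            ≤ ∫⁻ _ in A n, ENNReal.ofReal (((1/2 : ℝ) ^ (n + 1)) ^ s) :=
              setLIntegral_mono' hAmeas hstep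
          _ = ENNReal.ofReal (((1/2 : ℝ) ^ (n + 1)) ^ s) * volume (A n) := by
              rw [setLIntegral_const]
          _ ≤ ENNReal.ofReal (((1/2 : ℝ) ^ (n + 1)) ^ s)
                * volume (Metric.ball (0 : EuclideanSpace ℝ (Fin d)) ((1/2 : ℝ) ^ n)) := by
              apply mul_le_mul_right
              apply measure_mono
              rw [hA]
              exact diff_subset
          _ = ENNReal.ofReal (((1/2 : ℝ) ^ (n + 1)) ^ s)
                * (ENNReal.ofReal (((1/2 : ℝ) ^ n) ^ d)
                    * volume (Metric.ball (0 : EuclideanSpace ℝ (Fin d)) 1)) := by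
              rw [Measure.addHaar_ball volume 0 (by positivity)]
              rw [finrank_euclideanSpace_fin]
          _ = (ENNReal.ofReal ((1/2 : ℝ) ^ s) * volume (Metric.ball (0 : EuclideanSpace ℝ (Fin d)) 1))
                * ENNReal.ofReal ((1/2 : ℝ) ^ ((d : ℝ) + s)) ^ n := by
              have e1 : (((1/2 : ℝ) ^ (n + 1)) ^ s : ℝ) = (1/2 : ℝ) ^ (((n : ℝ) + 1) * s) := by
                rw [← Real.rpow_natCast (1/2 : ℝ) (n + 1), ← Real.rpow_mul (by norm_num)]
                push_cast
                ring_nf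
              have e2 : ((((1/2 : ℝ) ^ n) ^ d) : ℝ) = (1/2 : ℝ) ^ ((n : ℝ) * d) := by
                rw [← pow_mul, ← Real.rpow_natCast (1/2 : ℝ) (n * d)]
                push_cast
                ring_nf
              have e3 : (ENNReal.ofReal ((1/2 : ℝ) ^ ((d : ℝ) + s))) ^ n
                  = ENNReal.ofReal ((1/2 : ℝ) ^ (((d : ℝ) + s) * n)) := by
                rw [← ENNReal.ofReal_pow (by positivity), ← Real.rpow_natCast ((1/2:ℝ) ^ ((d:ℝ)+s)) n,
                  ← Real.rpow_mul (by norm_num)]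
              have e4 : ENNReal.ofReal ((1/2 : ℝ) ^ (((n : ℝ) + 1) * s))
                    * ENNReal.ofReal ((1/2 : ℝ) ^ ((n : ℝ) * (d : ℝ)))
                  = ENNReal.ofReal ((1/2 : ℝ) ^ s)
                    * ENNReal.ofReal ((1/2 : ℝ) ^ (((d : ℝ) + s) * (n : ℝ))) := by
                rw [← ENNReal.ofReal_mul (by positivity), ← ENNReal.ofReal_mul (by positivity),
                  ← Real.rpow_add (by norm_num : (0:ℝ) < 1/2),
                  ← Real.rpow_add (by norm_num : (0:ℝ) < 1/2)]
                congr 1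
                ring
              rw [e1, e2, e3]
              calc ENNReal.ofReal ((1/2 : ℝ) ^ (((n : ℝ) + 1) * s))
                    * (ENNReal.ofReal ((1/2 : ℝ) ^ ((n : ℝ) * (d : ℝ)))
                      * volume (Metric.ball (0 : EuclideanSpace ℝ (Fin d)) 1))
                  = (ENNReal.ofReal ((1/2 : ℝ) ^ (((n : ℝ) + 1) * s))
                      * ENNReal.ofReal ((1/2 : ℝ) ^ ((n : ℝ) * (d : ℝ))))
                      * volume (Metric.ball (0 : EuclideanSpace ℝ (Fin d)) 1) := by ring
                _ = (ENNReal.ofReal ((1/2 : ℝ) ^ s)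
                      * ENNReal.ofReal ((1/2 : ℝ) ^ (((d : ℝ) + s) * (n : ℝ))))
                      * volume (Metric.ball (0 : EuclideanSpace ℝ (Fin d)) 1) := by rw [e4]
                _ = ENNReal.ofReal ((1/2 : ℝ) ^ s)
                      * volume (Metric.ball (0 : EuclideanSpace ℝ (Fin d)) 1)
                      * ENNReal.ofReal ((1/2 : ℝ) ^ (((d : ℝ) + s) * (n : ℝ))) := by ring
    _ < ⊤ := by
        rw [ENNReal.tsum_mul_left, ENNReal.tsum_geometric]
        apply ENNReal.mul_lt_top
        · exact ENNReal.mul_lt_top ENNReal.ofReal_lt_top measure_ball_lt_top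
        · rw [ENNReal.inv_lt_top]
          rw [tsub_pos_iff_lt]
          apply ENNReal.ofReal_lt_one.2
          apply Real.rpow_lt_one (by norm_num) (by norm_num)
          linarith

private lemma aux_sub_left (d : ℕ) (s : ℝ) (y : EuclideanSpace ℝ (Fin d)) (r : ℝ) :
    (Metric.ball y r = (fun z : EuclideanSpace ℝ (Fin d) => y - z) ⁻¹' Metric.ball 0 r) := by
  ext z
  simp [Metric.mem_ball, dist_eq_norm, norm_sub_rev]

end AuxWick

/-- Key covariance estimate for Wick powers: if `|G(z)| ≤ |z|^ρ` with `ρ ∈ (-d, 0]` and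
`ρ·k > -d`, then for every `λ ∈ (0,1]`, every `x`, and every smooth `φ` supported in the
ball of radius `1/4` with `‖φ‖_∞ ≤ 1`, one has
`∫∫ φ_x^λ(y) φ_x^λ(z) |G(y-z)|^k dy dz ≲ λ^{ρk}`,
where `φ_x^λ(z) = λ^{-d} φ((z-x)/λ)` and the constant depends only on `d, ρ, k`. -/
theorem wick_covariance_estimate
    (d k : ℕ) (hd : 1 ≤ d) (hk : 1 ≤ k)
    (ρ : ℝ) (hρ1 : -(d : ℝ) < ρ) (hρ2 : ρ ≤ 0) (hρk : ρ * k > -(d : ℝ)) :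
    ∃ C : ℝ, 0 < C ∧
      ∀ G : EuclideanSpace ℝ (Fin d) → ℝ, Measurable G →
        (∀ z : EuclideanSpace ℝ (Fin d), z ≠ 0 → |G z| ≤ ‖z‖ ^ ρ) →
      ∀ φ : EuclideanSpace ℝ (Fin d) → ℝ, ContDiff ℝ (⊤ : ℕ∞) φ →
        Function.support φ ⊆ Metric.ball (0 : EuclideanSpace ℝ (Fin d)) (1/4) →
        (∀ y, |φ y| ≤ 1) →
      ∀ x : EuclideanSpace ℝ (Fin d), ∀ lam : ℝ, lam ∈ Set.Ioc (0:ℝ) 1 →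
        (∫ y, ∫ z,
            (lam ^ (-(d : ℝ)) * φ (lam⁻¹ • (y - x)))
              * (lam ^ (-(d : ℝ)) * φ (lam⁻¹ • (z - x)))
              * |G (y - z)| ^ k)
          ≤ C * lam ^ (ρ * k) := by
  haveI : NeZero d := ⟨by omega⟩
  set s : ℝ := ρ * k with hs_def
  have hs1 : -(d : ℝ) < s := hρk
  have hs2 : s ≤ 0 := mul_nonpos_of_nonpos_of_nonneg hρ2 (Nat.cast_nonneg k)
  have hint1 : IntegrableOn (fun w : EuclideanSpace ℝ (Fin d) => ‖w‖ ^ s)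
      (Metric.ball 0 1) volume := aux_integrableOn_rpow d hd s hs1 hs2
  set J : ℝ := ∫ w in Metric.ball (0 : EuclideanSpace ℝ (Fin d)) (1/2), ‖w‖ ^ s with hJdef
  have hJ0 : 0 ≤ J := integral_nonneg fun w => Real.rpow_nonneg (norm_nonneg _) _
  set Vb : ℝ := (volume (Metric.ball (0 : EuclideanSpace ℝ (Fin d)) 1)).toReal with hVbdef
  have hVb0 : 0 ≤ Vb := ENNReal.toReal_nonneg
  refine ⟨J * Vb / 4 ^ d + 1, by positivity, ?_⟩
  intro G hGmeas hG φ hφsmooth hφsupp hφle x lam hlam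
  obtain ⟨hlam0, hlam1⟩ := hlam
  have hlamd : (0 : ℝ) < lam ^ (-(d : ℝ)) := Real.rpow_pos_of_pos hlam0 _
  set B : ℝ := lam ^ (-(d : ℝ)) with hBdef
  set Φ : EuclideanSpace ℝ (Fin d) → ℝ := fun u => B * φ (lam⁻¹ • (u - x)) with hΦdef
  have hlamspos : (0 : ℝ) < lam ^ s := Real.rpow_pos_of_pos hlam0 _
  -- support and bound for Φ
  have hsupp : ∀ u, Φ u ≠ 0 → u ∈ Metric.ball x (lam / 4) := by
    intro u hu
    have hφu : φ (lam⁻¹ • (u - x)) ≠ 0 := by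
      intro h; apply hu; simp [hΦdef, h]
    have hmem := hφsupp (Function.mem_support.2 hφu)
    rw [mem_ball_zero_iff] at hmem
    rw [norm_smul, Real.norm_eq_abs, abs_of_pos (inv_pos.2 hlam0)] at hmem
    rw [mem_ball_iff_norm]
    calc ‖u - x‖ = lam * (lam⁻¹ * ‖u - x‖) := by field_simp
      _ < lam * (1/4) := by
        apply mul_lt_mul_of_pos_left hmem hlam0
      _ = lam / 4 := by ring
  have hΦbound : ∀ u, |Φ u| ≤ B := by
    intro u
    rw [hΦdef]
    rw [abs_mul, abs_of_pos hlamd]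
    calc B * |φ (lam⁻¹ • (u - x))| ≤ B * 1 := by
          apply mul_le_mul_of_nonneg_left (hφle _) hlamd.le
      _ = B := mul_one B
  -- the rescaled kernel integral
  set Ilam : ℝ := ∫ w in Metric.ball (0 : EuclideanSpace ℝ (Fin d)) (lam / 2), ‖w‖ ^ s
    with hIdef
  have hI0 : 0 ≤ Ilam := integral_nonneg fun w => Real.rpow_nonneg (norm_nonneg _) _
  have hint_lam : IntegrableOn (fun w : EuclideanSpace ℝ (Fin d) => ‖w‖ ^ s)
      (Metric.ball 0 (lam / 2)) volume :=
    hint1.mono_set (Metric.ball_subset_ball (by linarith))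
  -- translation facts
  have htrans_int : ∀ y : EuclideanSpace ℝ (Fin d),
      IntegrableOn (fun z => ‖y - z‖ ^ s) (Metric.ball y (lam / 2)) volume := by
    intro y
    have hmp : MeasurePreserving (fun z : EuclideanSpace ℝ (Fin d) => y - z) volume volume :=
      Measure.measurePreserving_sub_left volume y
    have hemb : MeasurableEmbedding (fun z : EuclideanSpace ℝ (Fin d) => y - z) :=
      (MeasurableEquiv.subLeft y).measurableEmbedding
    have h1 : Integrable ((Metric.ball (0 : EuclideanSpace ℝ (Fin d)) (lam/2)).indicator
        (fun w => ‖w‖ ^ s)) volume :=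
      (integrable_indicator_iff Metric.isOpen_ball.measurableSet).2 hint_lam
    have h2 : Integrable (((Metric.ball (0 : EuclideanSpace ℝ (Fin d)) (lam/2)).indicator
        (fun w => ‖w‖ ^ s)) ∘ (fun z => y - z)) volume :=
      (hmp.integrable_comp_emb hemb).2 h1
    have h3 : (((Metric.ball (0 : EuclideanSpace ℝ (Fin d)) (lam/2)).indicator
        (fun w => ‖w‖ ^ s)) ∘ (fun z => y - z))
        = (Metric.ball y (lam/2)).indicator (fun z => ‖y - z‖ ^ s) := by
      ext z
      simp only [Function.comp_apply]
      have hballiff : y - z ∈ Metric.ball (0 : EuclideanSpace ℝ (Fin d)) (lam/2)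
          ↔ z ∈ Metric.ball y (lam/2) := by
        rw [mem_ball_zero_iff, Metric.mem_ball, dist_eq_norm, norm_sub_rev y z]
      by_cases hz : z ∈ Metric.ball y (lam/2)
      · rw [indicator_of_mem (hballiff.2 hz), indicator_of_mem hz]
      · rw [indicator_of_notMem (fun h => hz (hballiff.1 h)), indicator_of_notMem hz]
    rw [h3] at h2
    exact (integrable_indicator_iff Metric.isOpen_ball.measurableSet).1 h2
  have htrans_val : ∀ y : EuclideanSpace ℝ (Fin d),
      ∫ z in Metric.ball y (lam / 2), ‖y - z‖ ^ s = Ilam := by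
    intro y
    have hmp : MeasurePreserving (fun z : EuclideanSpace ℝ (Fin d) => y - z) volume volume :=
      Measure.measurePreserving_sub_left volume y
    have hemb : MeasurableEmbedding (fun z : EuclideanSpace ℝ (Fin d) => y - z) :=
      (MeasurableEquiv.subLeft y).measurableEmbedding
    rw [hIdef, aux_sub_left d s y (lam/2)]
    exact hmp.setIntegral_preimage_emb hemb (fun w => ‖w‖ ^ s) _
  -- the dominating function
  set H : EuclideanSpace ℝ (Fin d) → ℝ :=
    (Metric.ball x (lam / 4)).indicator (fun _ => B * B * Ilam) with hHdef
  have hHint : Integrable H volume := by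
    rw [hHdef]
    apply (integrable_indicator_iff Metric.isOpen_ball.measurableSet).2
    exact integrableOn_const measure_ball_lt_top.ne
  have hH0 : ∀ y, 0 ≤ H y := by
    intro y
    rw [hHdef]
    apply indicator_nonneg
    intro _ _
    positivity
  -- pointwise bound for the inner integral
  have hFH : ∀ y, (∫ z, Φ y * Φ z * |G (y - z)| ^ k) ≤ H y := by
    intro y
    by_cases hy : y ∈ Metric.ball x (lam / 4)
    · have hHy : H y = B * B * Ilam := by rw [hHdef, indicator_of_mem hy]
      set g : EuclideanSpace ℝ (Fin d) → ℝ :=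
        fun z => (B * B) * (Metric.ball y (lam / 2)).indicator (fun z => ‖y - z‖ ^ s) z
        with hgdef
      have hgint : Integrable g volume := by
        apply Integrable.const_mul
        exact (integrable_indicator_iff Metric.isOpen_ball.measurableSet).2 (htrans_int y)
      have hae : ∀ᵐ z : EuclideanSpace ℝ (Fin d), |Φ y * Φ z * |G (y - z)| ^ k| ≤ g z := by
        have hne : ∀ᵐ z : EuclideanSpace ℝ (Fin d), z ≠ y := by
          refine ae_iff.2 ?_
          have : {z : EuclideanSpace ℝ (Fin d) | ¬ z ≠ y} = {y} := by ext z; simp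
          rw [this]
          exact measure_singleton y
        filter_upwards [hne] with z hz
        by_cases hz2 : Φ z = 0
        · rw [hz2, mul_zero, zero_mul, abs_zero]
          rw [hgdef]
          apply mul_nonneg (by positivity)
          apply indicator_nonneg
          intro _ _
          exact Real.rpow_nonneg (norm_nonneg _) _
        · have hzball : z ∈ Metric.ball y (lam / 2) := by
            have h1 := hsupp z hz2
            rw [Metric.mem_ball] at h1 hy ⊢
            calc dist z y ≤ dist z x + dist x y := dist_triangle z x y
              _ < lam / 4 + lam / 4 := by
                  apply add_lt_add h1
                  rwa [dist_comm]
              _ = lam / 2 := by ring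
          have hw : y - z ≠ 0 := sub_ne_zero.2 (Ne.symm hz)
          have hGb : |G (y - z)| ^ k ≤ ‖y - z‖ ^ s := by
            calc |G (y - z)| ^ k ≤ (‖y - z‖ ^ ρ) ^ k :=
                pow_le_pow_left₀ (abs_nonneg _) (hG _ hw) k
              _ = ‖y - z‖ ^ s := by
                rw [← Real.rpow_natCast (‖y - z‖ ^ ρ) k, ← Real.rpow_mul (norm_nonneg _)]
          calc |Φ y * Φ z * |G (y - z)| ^ k|
              = |Φ y| * |Φ z| * |G (y - z)| ^ k := by
                rw [abs_mul, abs_mul, abs_pow, abs_abs]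
            _ ≤ B * B * (‖y - z‖ ^ s) := by
                apply mul_le_mul (mul_le_mul (hΦbound y) (hΦbound z) (abs_nonneg _) hlamd.le)
                  hGb (pow_nonneg (abs_nonneg _) k) (by positivity)
            _ = g z := by simp only [hgdef, indicator_of_mem hzball]
      calc (∫ z, Φ y * Φ z * |G (y - z)| ^ k)
          ≤ |∫ z, Φ y * Φ z * |G (y - z)| ^ k| := le_abs_self _
        _ ≤ ∫ z, |Φ y * Φ z * |G (y - z)| ^ k| := by
            have h := norm_integral_le_integral_norm (μ := volume)
              (fun z => Φ y * Φ z * |G (y - z)| ^ k)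
            simpa only [Real.norm_eq_abs] using h
        _ ≤ ∫ z, g z :=
            integral_mono_of_nonneg (Filter.Eventually.of_forall fun z => abs_nonneg _)
              hgint hae
        _ = B * B * Ilam := by
            rw [hgdef]
            rw [integral_const_mul]
            rw [integral_indicator Metric.isOpen_ball.measurableSet]
            rw [htrans_val y]
        _ = H y := hHy.symm
    · have hΦy : Φ y = 0 := by
        by_contra h
        exact hy (hsupp y h)
      have : ∀ z, Φ y * Φ z * |G (y - z)| ^ k = 0 := by
        intro z; rw [hΦy, zero_mul, zero_mul]
      rw [show (∫ z, Φ y * Φ z * |G (y - z)| ^ k) = 0 by simp [this]]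
      exact hH0 y
  -- value of the dominating integral
  have hHval : ∫ y, H y = B * B * Ilam * ((lam / 4) ^ d * Vb) := by
    rw [hHdef, integral_indicator_const _ Metric.isOpen_ball.measurableSet]
    rw [measureReal_def, Measure.addHaar_ball volume x (by positivity : (0:ℝ) ≤ lam / 4)]
    rw [finrank_euclideanSpace_fin]
    rw [ENNReal.toReal_mul, ENNReal.toReal_ofReal (by positivity)]
    rw [smul_eq_mul, hVbdef]
    ring
  -- scaling identity for Ilam
  have hIval : Ilam = lam ^ s * lam ^ d * J := by
    have hmem : ∀ w : EuclideanSpace ℝ (Fin d),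
        lam⁻¹ • w ∈ Metric.ball (0 : EuclideanSpace ℝ (Fin d)) (1/2)
          ↔ w ∈ Metric.ball (0 : EuclideanSpace ℝ (Fin d)) (lam / 2) := by
      intro w
      rw [mem_ball_zero_iff, mem_ball_zero_iff, norm_smul, Real.norm_eq_abs,
        abs_of_pos (inv_pos.2 hlam0)]
      rw [inv_mul_lt_iff₀ hlam0]
      constructor <;> intro h <;> linarith
    have hkey : ∀ w : EuclideanSpace ℝ (Fin d),
        (Metric.ball (0 : EuclideanSpace ℝ (Fin d)) (lam / 2)).indicator
          (fun w => ‖w‖ ^ s) w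
        = lam ^ s * (Metric.ball (0 : EuclideanSpace ℝ (Fin d)) (1/2)).indicator
            (fun w => ‖w‖ ^ s) (lam⁻¹ • w) := by
      intro w
      by_cases hw : w ∈ Metric.ball (0 : EuclideanSpace ℝ (Fin d)) (lam / 2)
      · rw [indicator_of_mem hw, indicator_of_mem ((hmem w).2 hw)]
        rw [norm_smul, Real.norm_eq_abs, abs_of_pos (inv_pos.2 hlam0)]
        rw [Real.mul_rpow (by positivity) (norm_nonneg _), Real.inv_rpow hlam0.le]
        field_simp
      · rw [indicator_of_notMem hw, indicator_of_notMem (fun h => hw ((hmem w).1 h))]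
        rw [mul_zero]
    calc Ilam = ∫ w, (Metric.ball (0 : EuclideanSpace ℝ (Fin d)) (lam / 2)).indicator
          (fun w => ‖w‖ ^ s) w := by
          rw [hIdef, integral_indicator Metric.isOpen_ball.measurableSet]
      _ = ∫ w, lam ^ s * (Metric.ball (0 : EuclideanSpace ℝ (Fin d)) (1/2)).indicator
            (fun w => ‖w‖ ^ s) (lam⁻¹ • w) := by
          congr 1
          ext w
          exact hkey w
      _ = lam ^ s * ∫ w, (Metric.ball (0 : EuclideanSpace ℝ (Fin d)) (1/2)).indicator
            (fun w => ‖w‖ ^ s) (lam⁻¹ • w) := integral_const_mul _ _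
      _ = lam ^ s * (lam ^ d * ∫ w, (Metric.ball (0 : EuclideanSpace ℝ (Fin d)) (1/2)).indicator
            (fun w => ‖w‖ ^ s) w) := by
          rw [Measure.integral_comp_inv_smul_of_nonneg volume _ hlam0.le,
            finrank_euclideanSpace_fin, smul_eq_mul]
      _ = lam ^ s * lam ^ d * J := by
          rw [integral_indicator Metric.isOpen_ball.measurableSet, ← hJdef]
          ring
  -- conclusion
  have hgoal : (∫ y, ∫ z, Φ y * Φ z * |G (y - z)| ^ k) ≤ ∫ y, H y := by
    by_cases hFi : Integrable (fun y => ∫ z, Φ y * Φ z * |G (y - z)| ^ k) volume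
    · exact integral_mono hFi hHint hFH
    · rw [integral_undef hFi]
      exact integral_nonneg hH0
  have hBval : B = (lam ^ d)⁻¹ := by
    rw [hBdef, Real.rpow_neg hlam0.le, Real.rpow_natCast]
  have hfinal : ∫ y, H y = J * Vb / 4 ^ d * lam ^ s := by
    rw [hHval, hIval, hBval]
    have hlamdne : (lam : ℝ) ^ d ≠ 0 := pow_ne_zero d hlam0.ne'
    field_simp
    have h4 : ((1:ℝ)/4)^d * 4^d = 1 := by rw [← mul_pow]; norm_num
    linear_combination (J * lam ^ d * Vb) * h4
  calc (∫ y, ∫ z,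
        (lam ^ (-(d : ℝ)) * φ (lam⁻¹ • (y - x)))
          * (lam ^ (-(d : ℝ)) * φ (lam⁻¹ • (z - x)))
          * |G (y - z)| ^ k)
      = ∫ y, ∫ z, Φ y * Φ z * |G (y - z)| ^ k := rfl
    _ ≤ ∫ y, H y := hgoal
    _ = J * Vb / 4 ^ d * lam ^ s := hfinal
    _ ≤ (J * Vb / 4 ^ d + 1) * lam ^ s := by nlinarith
    _ = (J * Vb / 4 ^ d + 1) * lam ^ (ρ * k) := by rw [hs_def]
end
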